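/- Let E, F, G be real Hilbert spaces (each complete), and let f : E → G and g : F → G be continuous linear maps. Then the range inclusion range f ⊆ range g holds if and only if there exists a constant ν > 0 such that for every z ∈ G one has ‖f† z‖_E ≤ ν ‖g† z‖_F, where f† and g† denote the Hilbert-space adjoints of f and g. -/

import Mathlib

/-!
If `range f ⊆ range g`, the open mapping theorem, applied to the projection onto `E` of the closed
subspace `{(x, y) | f x = g y}` of `E × F`, gives preimages `g y = f x` with `‖y‖ ≤ C ‖x‖`; taking
`x = f† z` in `‖f† z‖² = ⟪f x, z⟫ = ⟪y, g† z⟫` yields `‖f† z‖ ≤ C ‖g† z‖`.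
Conversely, the estimate makes `g† z ↦ ⟪f x, z⟫` a well-defined bounded functional on `range g†`.
A Hahn–Banach extension of it is `⟪y, ·⟫` for some `y` by Riesz, and then `⟪g y, z⟫ = ⟪f x, z⟫`
for all `z`, i.e. `g y = f x`.
-/

open scoped InnerProductSpace

theorem ContinuousLinearMap.exists_preimage_norm_le_of_range_subset
    {𝕜 E F G : Type*} [NontriviallyNormedField 𝕜]
    [NormedAddCommGroup E] [NormedSpace 𝕜 E] [CompleteSpace E]
    [NormedAddCommGroup F] [NormedSpace 𝕜 F] [CompleteSpace F]
    [NormedAddCommGroup G] [NormedSpace 𝕜 G]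
    (f : E →L[𝕜] G) (g : F →L[𝕜] G) (h : Set.range f ⊆ Set.range g) :
    ∃ C > 0, ∀ x, ∃ y, g y = f x ∧ ‖y‖ ≤ C * ‖x‖ := by
  let P := LinearMap.ker (f.coprod (-g) : E × F →ₗ[𝕜] G)
  have : CompleteSpace P := (f.coprod (-g)).isClosed_ker.completeSpace_coe
  have mem_P {x : E} {y : F} : (x, y) ∈ P ↔ f x = g y := by
    simp [P, ← sub_eq_add_neg, sub_eq_zero]
  let π : P →L[𝕜] E := (fst 𝕜 E F).comp P.subtypeL
  have hπ : Function.Surjective π := fun x ↦ by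
    obtain ⟨y, hy⟩ := h ⟨x, rfl⟩
    exact ⟨⟨(x, y), mem_P.2 hy.symm⟩, rfl⟩
  obtain ⟨C, hC, hpre⟩ := π.exists_preimage_norm_le hπ
  refine ⟨C, hC, fun x ↦ ?_⟩
  obtain ⟨⟨⟨x', y⟩, hxy⟩, rfl, hle⟩ := hpre x
  exact ⟨y, (mem_P.1 hxy).symm, (_root_.norm_snd_le (x', y)).trans hle⟩

theorem LinearMap.exists_strongDual_comp_eq_of_norm_le
    {𝕜 F G : Type*} [RCLike 𝕜] [SeminormedAddCommGroup F] [NormedSpace 𝕜 F]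
    [AddCommGroup G] [Module 𝕜 G]
    (T : G →ₗ[𝕜] F) (φ : G →ₗ[𝕜] 𝕜) (c : ℝ) (h : ∀ z, ‖φ z‖ ≤ c * ‖T z‖) :
    ∃ ψ : StrongDual 𝕜 F, ∀ z, ψ (T z) = φ z := by
  have hker : LinearMap.ker T ≤ LinearMap.ker φ := fun z hz ↦ by
    simpa [LinearMap.mem_ker.1 hz] using h z
  let ℓ : LinearMap.range T →ₗ[𝕜] 𝕜 :=
    (LinearMap.ker T).liftQ φ hker ∘ₗ T.quotKerEquivRange.symm.toLinearMap
  have hℓ (z : G) : ℓ ⟨T z, LinearMap.mem_range_self T z⟩ = φ z := by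
    simp [ℓ]
  have hbound (w : LinearMap.range T) : ‖ℓ w‖ ≤ c * ‖w‖ := by
    obtain ⟨_, z, rfl⟩ := w
    simpa [hℓ] using h z
  obtain ⟨ψ, hψ, -⟩ := exists_extension_norm_eq _ (ℓ.mkContinuous c hbound)
  exact ⟨ψ, fun z ↦ (hψ _).trans (hℓ z)⟩

namespace ContinuousLinearMap

variable {𝕜 E F G : Type*} [RCLike 𝕜]
  [NormedAddCommGroup E] [InnerProductSpace 𝕜 E] [CompleteSpace E]
  [NormedAddCommGroup F] [InnerProductSpace 𝕜 F] [CompleteSpace F]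
  [NormedAddCommGroup G] [InnerProductSpace 𝕜 G] [CompleteSpace G]
  (f : E →L[𝕜] G) (g : F →L[𝕜] G)

theorem norm_adjoint_le_of_exists_preimage {C : ℝ} (hC : 0 ≤ C)
    (h : ∀ x, ∃ y, g y = f x ∧ ‖y‖ ≤ C * ‖x‖) (z : G) : ‖adjoint f z‖ ≤ C * ‖adjoint g z‖ := by
  obtain ⟨y, hy, hle⟩ := h (adjoint f z)
  have key : ‖adjoint f z‖ * ‖adjoint f z‖ ≤ ‖adjoint f z‖ * (C * ‖adjoint g z‖) :=
    calc ‖adjoint f z‖ * ‖adjoint f z‖ = ‖⟪adjoint f z, adjoint f z⟫_𝕜‖ := by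
          rw [← inner_self_eq_norm_mul_norm (𝕜 := 𝕜), inner_self_re_eq_norm]
      _ = ‖⟪y, adjoint g z⟫_𝕜‖ := by rw [adjoint_inner_right, adjoint_inner_right, hy]
      _ ≤ ‖y‖ * ‖adjoint g z‖ := norm_inner_le_norm _ _
      _ ≤ C * ‖adjoint f z‖ * ‖adjoint g z‖ := by gcongr
      _ = ‖adjoint f z‖ * (C * ‖adjoint g z‖) := by ring
  rcases (norm_nonneg (adjoint f z)).eq_or_lt with h0 | hpos
  · rw [← h0]; positivity
  · exact le_of_mul_le_mul_left key hpos

theorem range_subset_of_norm_adjoint_le {ν : ℝ}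
    (h : ∀ z, ‖adjoint f z‖ ≤ ν * ‖adjoint g z‖) : Set.range f ⊆ Set.range g := by
  rintro _ ⟨x, rfl⟩
  obtain ⟨ψ, hψ⟩ := LinearMap.exists_strongDual_comp_eq_of_norm_le (adjoint g).toLinearMap
    (innerₛₗ 𝕜 (f x)) (ν * ‖x‖) fun z ↦
      calc ‖⟪f x, z⟫_𝕜‖ = ‖⟪x, adjoint f z⟫_𝕜‖ := by rw [adjoint_inner_right]
        _ ≤ ‖x‖ * ‖adjoint f z‖ := norm_inner_le_norm _ _
        _ ≤ ‖x‖ * (ν * ‖adjoint g z‖) := by gcongr; exact h z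
        _ = ν * ‖x‖ * ‖adjoint g z‖ := by ring
  refine ⟨(InnerProductSpace.toDual 𝕜 F).symm ψ, ext_inner_right 𝕜 fun z ↦ ?_⟩
  rw [← adjoint_inner_right, InnerProductSpace.toDual_symm_apply]
  exact hψ z

end ContinuousLinearMap

/-- Range-inclusion / adjoint-estimate equivalence (Douglas-type lemma) for
continuous linear maps between real Hilbert spaces. -/
theorem range_subset_iff_adjoint_norm_le
    {E F G : Type*}
    [NormedAddCommGroup E] [InnerProductSpace ℝ E] [CompleteSpace E]
    [NormedAddCommGroup F] [InnerProductSpace ℝ F] [CompleteSpace F]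
    [NormedAddCommGroup G] [InnerProductSpace ℝ G] [CompleteSpace G]
    (f : E →L[ℝ] G) (g : F →L[ℝ] G) :
    Set.range f ⊆ Set.range g ↔
      ∃ ν : ℝ, 0 < ν ∧ ∀ z : G,
        ‖ContinuousLinearMap.adjoint f z‖ ≤ ν * ‖ContinuousLinearMap.adjoint g z‖ := by
  constructor
  · intro h
    obtain ⟨C, hC, hpre⟩ := f.exists_preimage_norm_le_of_range_subset g h
    exact ⟨C, hC, f.norm_adjoint_le_of_exists_preimage g hC.le hpre⟩
  · rintro ⟨ν, -, h⟩
    exact f.range_subset_of_norm_adjoint_le g h
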